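/- arXiv:2605.11642 — 3 statements merged into one kernel-verified Lean document; each statement's English description precedes it below -/
import Mathlib

section
/- Let δ = d mod 2 and c_{kl} = e^{-iπ(k(k+δ) + l(l+δ))/d}. Then for all integers a, b, Σ_{m,t=0}^{d-1} c_{m+a, t+b} · conj(c_{m,t}) · ω^{-ta - mb} = d² · e^{-iπ(a² + b² + δ(a+b))/d} if d divides a+b, and 0 otherwise. -/
open Complex BigOperators

noncomputable section

def ω (d : ℕ) : ℂ := Complex.exp (2 * Real.pi * Complex.I / (d : ℂ))

def cc (d : ℕ) (k l : ℤ) : ℂ :=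
  Complex.exp (-Real.pi * Complex.I * (k : ℂ) * ((k : ℂ) + (d % 2 : ℕ)) / (d : ℂ)) *
  Complex.exp (-Real.pi * Complex.I * (l : ℂ) * ((l : ℂ) + (d % 2 : ℕ)) / (d : ℂ))

/-!
The phases factor over the two coordinates, `c_{kl} = χ(k) χ(l)` with the chirp
`χ(k) = e^{-iπ k(k+δ)/d}`. Expanding the quadratic exponent gives
`χ(m+a) conj χ(m) = χ(a) ω^{-ma}`, so each summand equals `c_{ab} ζ^m ζ^t` with
`ζ = ω^{-(a+b)}`, and the double sum is `c_{ab} (Σ_{m<d} ζ^m)²`. Since `ω` is a primitive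
`d`-th root of unity, `Σ_{m<d} ζ^m` is `d` if `d ∣ a+b` and `0` otherwise.
-/

open Finset

theorem IsPrimitiveRoot.geom_sum_zpow {K : Type*} [Field K] {ζ : K} {d : ℕ}
    (hζ : IsPrimitiveRoot ζ d) (k : ℤ) :
    ∑ i ∈ range d, (ζ ^ k) ^ i = if (d : ℤ) ∣ k then (d : K) else 0 := by
  split_ifs with hk
  · simp [(hζ.zpow_eq_one_iff_dvd k).2 hk]
  · have hζk : (ζ ^ k) ^ d = 1 := by
      rw [← zpow_natCast, ← zpow_mul, mul_comm, zpow_mul, zpow_natCast, hζ.pow_eq_one, one_zpow]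
    rw [geom_sum_eq ((hζ.zpow_eq_one_iff_dvd k).not.2 hk), hζk, sub_self, zero_div]

theorem sum_range_pow_ω_zpow (d : ℕ) (k : ℤ) :
    ∑ i ∈ range d, (ω d ^ k) ^ i = if (d : ℤ) ∣ k then (d : ℂ) else 0 := by
  rcases eq_or_ne d 0 with rfl | hd
  · simp
  · exact (isPrimitiveRoot_exp d hd).geom_sum_zpow k

theorem ω_zpow (d : ℕ) (n : ℤ) : ω d ^ n = exp (n * (2 * Real.pi * I / d)) :=
  (exp_int_mul _ n).symm

def chirp (d : ℕ) (k : ℤ) : ℂ := exp (-Real.pi * I * k * (k + (d % 2 : ℕ)) / d)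

theorem cc_eq_chirp_mul_chirp (d : ℕ) (k l : ℤ) : cc d k l = chirp d k * chirp d l := rfl

theorem cc_eq_exp (d : ℕ) (a b : ℤ) :
    cc d a b = exp (-Real.pi * I * (a ^ 2 + b ^ 2 + (d % 2 : ℕ) * (a + b)) / d) := by
  rw [cc, ← exp_add]
  ring_nf

theorem chirp_add_mul_conj (d : ℕ) (m a : ℤ) :
    chirp d (m + a) * starRingEnd ℂ (chirp d m) = chirp d a * ω d ^ (-(m * a)) := by
  simp only [chirp, ω_zpow, ← exp_conj, ← exp_add, map_div₀, map_mul, map_neg, map_add,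
    conj_ofReal, conj_I, map_intCast, map_natCast]
  push_cast
  ring_nf

theorem cc_add_mul_conj_mul_ω_zpow (d : ℕ) (a b : ℤ) (m t : ℕ) :
    cc d (m + a) (t + b) * starRingEnd ℂ (cc d m t) * ω d ^ (-((t : ℤ) * a + m * b)) =
      cc d a b * (ω d ^ (-(a + b))) ^ m * (ω d ^ (-(a + b))) ^ t := by
  have hω : ω d ≠ 0 := exp_ne_zero _
  have hsplit : ω d ^ (-((t : ℤ) * a + m * b)) * (ω d ^ (-((m : ℤ) * a)) * ω d ^ (-((t : ℤ) * b)))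
      = (ω d ^ (-(a + b))) ^ m * (ω d ^ (-(a + b))) ^ t := by
    simp only [← zpow_natCast, ← zpow_mul, ← zpow_add₀ hω]
    ring_nf
  calc _ = chirp d (m + a) * starRingEnd ℂ (chirp d m) * (chirp d (t + b) *
          starRingEnd ℂ (chirp d t)) * ω d ^ (-((t : ℤ) * a + m * b)) := by
        rw [cc_eq_chirp_mul_chirp, cc_eq_chirp_mul_chirp, map_mul]
        ring
    _ = _ := by
        rw [chirp_add_mul_conj, chirp_add_mul_conj, cc_eq_chirp_mul_chirp, mul_assoc _ _ (_ ^ t),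
          ← hsplit]
        ring

theorem interference_sum_n1_general (d : ℕ) (a b : ℤ) :
    ∑ m ∈ Finset.range d, ∑ t ∈ Finset.range d,
        cc d ((m : ℤ) + a) ((t : ℤ) + b) * (starRingEnd ℂ) (cc d m t) *
          ω d ^ (-((t : ℤ) * a + (m : ℤ) * b))
      = if (d : ℤ) ∣ (a + b) then
          (d : ℂ) ^ 2 * Complex.exp (-Real.pi * Complex.I *
            ((a : ℂ) ^ 2 + (b : ℂ) ^ 2 + (d % 2 : ℕ) * ((a : ℂ) + (b : ℂ))) / (d : ℂ))
        else 0 := by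
  simp only [cc_add_mul_conj_mul_ω_zpow]
  rw [← sum_mul_sum, ← mul_sum, sum_range_pow_ω_zpow, cc_eq_exp]
  simp only [dvd_neg]
  split_ifs <;> ring

/-- The interference sum `Σ_{m,t} c_{m+a,t+b} c*_{m,t} ω^{-ta-mb}` equals
`d² e^{-iπ(a²+b²+δ(a+b))/d}` when `d ∣ a+b`, and `0` otherwise. -/
theorem interference_sum_n1 (d : ℕ) (hd : 2 ≤ d) (a b : ℤ) :
    ∑ m ∈ Finset.range d, ∑ t ∈ Finset.range d,
        cc d ((m : ℤ) + a) ((t : ℤ) + b) * (starRingEnd ℂ) (cc d m t) *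
          ω d ^ (-((t : ℤ) * a + (m : ℤ) * b))
      = if (d : ℤ) ∣ (a + b) then
          (d : ℂ) ^ 2 * Complex.exp (-Real.pi * Complex.I *
            ((a : ℂ) ^ 2 + (b : ℂ) ^ 2 + (d % 2 : ℕ) * ((a : ℂ) + (b : ℂ))) / (d : ℂ))
        else 0 :=
  interference_sum_n1_general d a b
end
end

section
/- Let δ = d mod 2 and c_{kl} = e^{-iπ(k(k+δ) + l(l+δ))/d}. Then for all integers a, b and all nonnegative integers p, q, Σ_{m,t=0}^{d-1} c_{m+a, t+b} · conj(c_{m,t}) · ω^{-ta - pmb - aq(t+b)} = d² · e^{-iπ(a² + b² + 2qab + δ(a+b))/d} if d divides both a + pb and a + b + qa, and 0 otherwise. -/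
open Complex BigOperators

noncomputable section

/-! The phases `c_{kl}` are quadratic in `(k, l)`, so shifting them is a linear character:
`c_{k+a,l+b} · conj c_{kl} = c_{ab} · ω^{-(ak+bl)}`. Each term of the sum is therefore a constant
times `ω^{-(a+pb)m} · ω^{-(a+b+qa)t}`, and the double sum factors into two geometric sums over the
`d`-th roots of unity, each equal to `d` or `0` according to the divisibility of the exponent. -/

theorem IsPrimitiveRoot.sum_range_zpow_mul {K : Type*} [Field K] {ζ : K} {k : ℕ}
    (hζ : IsPrimitiveRoot ζ k) (n : ℤ) :
    ∑ m ∈ Finset.range k, ζ ^ (n * m) = if (k : ℤ) ∣ n then (k : K) else 0 := by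
  simp_rw [zpow_mul, zpow_natCast]
  split_ifs with h
  · simp [(hζ.zpow_eq_one_iff_dvd n).mpr h]
  · rw [geom_sum_eq (mt (hζ.zpow_eq_one_iff_dvd n).mp h), ← zpow_natCast, ← zpow_mul,
      mul_comm, zpow_mul, hζ.zpow_eq_one, one_zpow, sub_self, zero_div]

theorem sum_range_omega_zpow_mul (d : ℕ) (n : ℤ) :
    ∑ m ∈ Finset.range d, ω d ^ (n * m) = if (d : ℤ) ∣ n then (d : ℂ) else 0 := by
  rcases eq_or_ne d 0 with rfl | hd
  · simp
  · exact (Complex.isPrimitiveRoot_exp d hd).sum_range_zpow_mul n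

theorem omega_ne_zero (d : ℕ) : ω d ≠ 0 := exp_ne_zero _

theorem omega_zpow (d : ℕ) (z : ℤ) : ω d ^ z = exp (z * (2 * Real.pi * I / d)) := by
  rw [ω, exp_int_mul]

theorem cc_add_mul_conj_cc (d : ℕ) (k l a b : ℤ) :
    cc d (k + a) (l + b) * starRingEnd ℂ (cc d k l) = cc d a b * ω d ^ (-(a * k + b * l)) := by
  simp only [cc, omega_zpow, map_mul, ← exp_conj, map_div₀, map_neg, map_add, conj_I,
    conj_ofReal, map_intCast, map_natCast, ← exp_add]
  congr 1
  push_cast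
  ring

theorem cc_mul_omega_zpow (d : ℕ) (a b : ℤ) (q : ℕ) :
    cc d a b * ω d ^ (-(a * q * b)) = exp (-Real.pi * I *
      ((a : ℂ) ^ 2 + (b : ℂ) ^ 2 + 2 * (q : ℂ) * a * b + (d % 2 : ℕ) * (a + b)) / d) := by
  simp only [cc, omega_zpow, ← exp_add]
  congr 1
  push_cast
  ring

theorem interference_sum_general_general (d : ℕ) (a b : ℤ) (p q : ℕ) :
    ∑ m ∈ Finset.range d, ∑ t ∈ Finset.range d,
        cc d ((m : ℤ) + a) ((t : ℤ) + b) * (starRingEnd ℂ) (cc d m t) *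
          ω d ^ (-((t : ℤ) * a + (p : ℤ) * m * b + a * (q : ℤ) * ((t : ℤ) + b)))
      = if (d : ℤ) ∣ (a + (p : ℤ) * b) ∧ (d : ℤ) ∣ (a + b + (q : ℤ) * a) then
          (d : ℂ) ^ 2 * Complex.exp (-Real.pi * Complex.I *
            ((a : ℂ) ^ 2 + (b : ℂ) ^ 2 + 2 * (q : ℂ) * (a : ℂ) * (b : ℂ) +
              (d % 2 : ℕ) * ((a : ℂ) + (b : ℂ))) / (d : ℂ))
        else 0 := by
  have hterm (m t : ℕ) :
      cc d (m + a) (t + b) * starRingEnd ℂ (cc d m t) *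
          ω d ^ (-(t * a + p * m * b + a * q * (t + b))) =
        cc d a b * ω d ^ (-(a * q * b)) *
          (ω d ^ (-(a + p * b) * m) * ω d ^ (-(a + b + q * a) * t)) := by
    rw [cc_add_mul_conj_cc]
    simp only [mul_assoc, ← zpow_add₀ (omega_ne_zero d)]
    congr 2
    ring
  simp_rw [hterm, ← Finset.mul_sum, ← Finset.sum_mul, sum_range_omega_zpow_mul,
    cc_mul_omega_zpow, dvd_neg, ite_zero_mul_ite_zero, mul_ite, mul_zero]
  congr 1
  ring

/-- The general interference sum `Σ_{m,t} c_{m+a,t+b} c*_{m,t} ω^{-ta-pmb-aq(t+b)}`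
equals `d² e^{-iπ(a²+b²+2qab+δ(a+b))/d}` when `d ∣ a+pb` and `d ∣ a+b+qa`,
and `0` otherwise. -/
theorem interference_sum_general (d : ℕ) (hd : 2 ≤ d) (a b : ℤ) (p q : ℕ) :
    ∑ m ∈ Finset.range d, ∑ t ∈ Finset.range d,
        cc d ((m : ℤ) + a) ((t : ℤ) + b) * (starRingEnd ℂ) (cc d m t) *
          ω d ^ (-((t : ℤ) * a + (p : ℤ) * m * b + a * (q : ℤ) * ((t : ℤ) + b)))
      = if (d : ℤ) ∣ (a + (p : ℤ) * b) ∧ (d : ℤ) ∣ (a + b + (q : ℤ) * a) then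
          (d : ℂ) ^ 2 * Complex.exp (-Real.pi * Complex.I *
            ((a : ℂ) ^ 2 + (b : ℂ) ^ 2 + 2 * (q : ℂ) * (a : ℂ) * (b : ℂ) +
              (d % 2 : ℕ) * ((a : ℂ) + (b : ℂ))) / (d : ℂ))
        else 0 :=
  interference_sum_general_general d a b p q

end
end

section
/- Let d ≥ 2 and let n ≥ 1. Define ρ = (1/d^n) Σ over pairs (a,b) in the solution set S of the system {a + pb ≡ 0, a + b + qa ≡ 0 (mod d)} of e^{-iπ(a²+b²+2qab+δ(a+b))/d} ⟨ψ|X_d^a Z_d^b|ψ⟩ (X_d^a Z_d^b)^{⊗p} ⊗ (X_d^{-a} Z_d^b)^{⊗q}, where p + q = n and δ = d mod 2. If gcd(d, p(q+1) − 1) = 1, then ρ = (1/d^n) I^{⊗n}, i.e., ρ is the maximally mixed state on (ℂ^d)^{⊗n}, independent of the unit vector ψ. -/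
open Matrix Complex BigOperators
open scoped Kronecker

/-! The congruence system has determinant `1 - p(q+1)`, a unit mod `d` by the gcd hypothesis, so its
only solution is `(a, b) = (0, 0)`. The sum thus collapses to a single term whose Pauli operators
are all the identity and whose coefficient is `⟨ψ|ψ⟩ = 1`. -/

noncomputable section

/-- The generalized Pauli shift operator `X_d : |k⟩ ↦ |k+1⟩` on `ℂ^d`. -/
def Xd (d : ℕ) : Matrix (ZMod d) (ZMod d) ℂ :=
  Matrix.of fun i j => if i = j + 1 then 1 else 0

/-- The generalized Pauli phase operator `Z_d : |k⟩ ↦ ω^k |k⟩` on `ℂ^d`. -/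
def Zd (d : ℕ) : Matrix (ZMod d) (ZMod d) ℂ :=
  Matrix.diagonal fun k => ω d ^ (k.val)

/-- Integer power of a `d`-periodic matrix (`M^d = 1`), so `M^k := M^(k mod d)`. -/
def zp (d : ℕ) [NeZero d] (M : Matrix (ZMod d) (ZMod d) ℂ) (k : ℤ) :
    Matrix (ZMod d) (ZMod d) ℂ :=
  M ^ (k % (d : ℤ)).toNat

/-- The `m`-fold tensor power of a matrix on `ℂ^d`, as a matrix on `(ℂ^d)^{⊗m}`. -/
def tpow {d : ℕ} (M : Matrix (ZMod d) (ZMod d) ℂ) (m : ℕ) :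
    Matrix (Fin m → ZMod d) (Fin m → ZMod d) ℂ :=
  Matrix.of fun f g => ∏ i, M (f i) (g i)

lemma tpow_one (d m : ℕ) : tpow (1 : Matrix (ZMod d) (ZMod d) ℂ) m = 1 := by
  ext f g
  simp only [tpow, of_apply, one_apply, Finset.prod_boole, Finset.mem_univ, forall_const,
    ← funext_iff]

lemma zp_zero (d : ℕ) [NeZero d] (M : Matrix (ZMod d) (ZMod d) ℂ) : zp d M 0 = 1 := by
  simp [zp]

lemma ZMod.isUnit_intCast_of_gcd_eq_one {d : ℕ} {z : ℤ} (h : Int.gcd d z = 1) :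
    IsUnit (z : ZMod d) :=
  isCoprime_zero_left.mp <| by
    simpa using (Int.isCoprime_iff_gcd_eq_one.mpr h).map (Int.castRingHom (ZMod d))

lemma linear_system_eq_zero_of_isUnit_det {R : Type*} [CommRing R] {p q a b : R}
    (hu : IsUnit (p * (q + 1) - 1)) (h₁ : a + p * b = 0) (h₂ : a + b + q * a = 0) :
    a = 0 ∧ b = 0 := by
  have hb : b = -(q + 1) * a := by linear_combination h₂
  have ha : a = 0 := hu.mul_right_eq_zero.mp (by linear_combination -h₁ + p * hb)
  exact ⟨ha, by rw [hb, ha, mul_zero]⟩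

lemma filter_linear_system_eq_singleton_zero {R : Type*} [CommRing R] [Fintype R] [DecidableEq R]
    {p q : R} (hu : IsUnit (p * (q + 1) - 1)) :
    Finset.univ.filter (fun ab : R × R => ab.1 + p * ab.2 = 0 ∧ ab.1 + ab.2 + q * ab.1 = 0) =
      {(0, 0)} := by
  ext ⟨a, b⟩
  simp only [Finset.mem_filter, Finset.mem_univ, true_and, Finset.mem_singleton, Prod.mk.injEq]
  refine ⟨fun ⟨h₁, h₂⟩ => linear_system_eq_zero_of_isUnit_det hu h₁ h₂, ?_⟩
  rintro ⟨rfl, rfl⟩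
  simp

theorem aligned_subset_maximally_mixed_general (d n p q : ℕ) [NeZero d]
    (ψ : ZMod d → ℂ) (hψ : ∑ i, (starRingEnd ℂ) (ψ i) * ψ i = 1)
    (hgcd : Int.gcd (d : ℤ) ((p : ℤ) * ((q : ℤ) + 1) - 1) = 1) :
    ((d : ℂ) ^ n)⁻¹ •
      ∑ ab ∈ Finset.univ.filter
          (fun ab : ZMod d × ZMod d =>
            ab.1 + (p : ZMod d) * ab.2 = 0 ∧ ab.1 + ab.2 + (q : ZMod d) * ab.1 = 0),
        (Complex.exp (-Real.pi * Complex.I *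
            ((ab.1.val : ℂ) ^ 2 + (ab.2.val : ℂ) ^ 2 +
              2 * (q : ℂ) * (ab.1.val : ℂ) * (ab.2.val : ℂ) +
              ((d % 2 : ℕ) : ℂ) * ((ab.1.val : ℂ) + (ab.2.val : ℂ))) / (d : ℂ)) *
          dotProduct (star ψ)
            ((zp d (Xd d) (ab.1.val : ℤ) * zp d (Zd d) (ab.2.val : ℤ)).mulVec ψ)) •
        (tpow (zp d (Xd d) (ab.1.val : ℤ) * zp d (Zd d) (ab.2.val : ℤ)) p ⊗ₖ
          tpow (zp d (Xd d) (-(ab.1.val : ℤ)) * zp d (Zd d) (ab.2.val : ℤ)) q)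
      = ((d : ℂ) ^ n)⁻¹ •
          (1 : Matrix ((Fin p → ZMod d) × (Fin q → ZMod d))
              ((Fin p → ZMod d) × (Fin q → ZMod d)) ℂ) := by
  have hu : IsUnit ((p : ZMod d) * ((q : ZMod d) + 1) - 1) := by
    simpa using ZMod.isUnit_intCast_of_gcd_eq_one hgcd
  have hnorm : star ψ ⬝ᵥ ψ = 1 := hψ
  rw [filter_linear_system_eq_singleton_zero hu, Finset.sum_singleton]
  simp [zp_zero, tpow_one, hnorm]

/-- If `gcd(d, p(q+1) − 1) = 1`, the reduced state of an aligned unauthorized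
subset with `p` signal and `q = n − p` noise qudits is maximally mixed,
independently of the unit input state `ψ`. -/
theorem aligned_subset_maximally_mixed (d n p q : ℕ) [NeZero d]
    (hd : 2 ≤ d) (hn : 1 ≤ n) (hpq : p + q = n)
    (ψ : ZMod d → ℂ) (hψ : ∑ i, (starRingEnd ℂ) (ψ i) * ψ i = 1)
    (hgcd : Int.gcd (d : ℤ) ((p : ℤ) * ((q : ℤ) + 1) - 1) = 1) :
    ((d : ℂ) ^ n)⁻¹ •
      ∑ ab ∈ Finset.univ.filter
          (fun ab : ZMod d × ZMod d =>
            ab.1 + (p : ZMod d) * ab.2 = 0 ∧ ab.1 + ab.2 + (q : ZMod d) * ab.1 = 0),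
        (Complex.exp (-Real.pi * Complex.I *
            ((ab.1.val : ℂ) ^ 2 + (ab.2.val : ℂ) ^ 2 +
              2 * (q : ℂ) * (ab.1.val : ℂ) * (ab.2.val : ℂ) +
              ((d % 2 : ℕ) : ℂ) * ((ab.1.val : ℂ) + (ab.2.val : ℂ))) / (d : ℂ)) *
          dotProduct (star ψ)
            ((zp d (Xd d) (ab.1.val : ℤ) * zp d (Zd d) (ab.2.val : ℤ)).mulVec ψ)) •
        (tpow (zp d (Xd d) (ab.1.val : ℤ) * zp d (Zd d) (ab.2.val : ℤ)) p ⊗ₖ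
          tpow (zp d (Xd d) (-(ab.1.val : ℤ)) * zp d (Zd d) (ab.2.val : ℤ)) q)
      = ((d : ℂ) ^ n)⁻¹ •
          (1 : Matrix ((Fin p → ZMod d) × (Fin q → ZMod d))
              ((Fin p → ZMod d) × (Fin q → ZMod d)) ℂ) :=
  aligned_subset_maximally_mixed_general d n p q ψ hψ hgcd

end
end
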